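/- arXiv:2306.01532 — 3 statements merged into one kernel-verified Lean document; each statement's English description precedes it below -/
import Mathlib

section
/- Behaviour of supersolutions at the boundary: Let Ω ⊂ ℝⁿ be a bounded, open, uniformly convex domain, let f : Ω̄ × ℝ × ℝⁿ → ℝ be continuous, and let g : ∂Ω → ℝ be continuous. If w : Ω̄ → ℝ is a lower semicontinuous viscosity supersolution of the generalized Dirichlet problem for the Monge–Ampère equation, then for every x₀ ∈ ∂Ω, either w(x₀) ≥ g(x₀) or the subgradient ∂w(x₀) is empty. -/
open scoped RealInnerProductSpace Classical

/-- `det⁺(X) = det X` if `X` is positive semidefinite, and `-1` otherwise. -/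
noncomputable def detPlus {n : ℕ} (X : Matrix (Fin n) (Fin n) ℝ) : ℝ :=
  if X.PosSemidef then X.det else -1

/-- The Hessian matrix of `φ : ℝⁿ → ℝ` at `x`, given by the second iterated derivative. -/
noncomputable def hessianMatrix {n : ℕ} (φ : EuclideanSpace ℝ (Fin n) → ℝ)
    (x : EuclideanSpace ℝ (Fin n)) : Matrix (Fin n) (Fin n) ℝ :=
  Matrix.of fun i j =>
    iteratedFDeriv ℝ 2 φ x ![EuclideanSpace.single i 1, EuclideanSpace.single j 1]

/-- Lower envelope `F_*` of the generalized Dirichlet Monge–Ampère operator. -/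
noncomputable def MALower {n : ℕ} (Ω : Set (EuclideanSpace ℝ (Fin n)))
    (f : EuclideanSpace ℝ (Fin n) → ℝ → EuclideanSpace ℝ (Fin n) → ℝ)
    (g : EuclideanSpace ℝ (Fin n) → ℝ)
    (x : EuclideanSpace ℝ (Fin n)) (u : ℝ) (p : EuclideanSpace ℝ (Fin n))
    (X : Matrix (Fin n) (Fin n) ℝ) : ℝ :=
  if x ∈ Ω then -detPlus X + f x u p
  else min (u - g x) (-detPlus X + f x u p)

/-- Upper envelope `F^*` of the generalized Dirichlet Monge–Ampère operator. -/
noncomputable def MAUpper {n : ℕ} (Ω : Set (EuclideanSpace ℝ (Fin n)))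
    (f : EuclideanSpace ℝ (Fin n) → ℝ → EuclideanSpace ℝ (Fin n) → ℝ)
    (g : EuclideanSpace ℝ (Fin n) → ℝ)
    (x : EuclideanSpace ℝ (Fin n)) (u : ℝ) (p : EuclideanSpace ℝ (Fin n))
    (X : Matrix (Fin n) (Fin n) ℝ) : ℝ :=
  if x ∈ Ω then -detPlus X + f x u p
  else max (u - g x) (-detPlus X + f x u p)

/-- Viscosity subsolution of the generalized Dirichlet problem on `closure Ω`. -/
def IsViscositySubsolution {n : ℕ} (Ω : Set (EuclideanSpace ℝ (Fin n)))
    (f : EuclideanSpace ℝ (Fin n) → ℝ → EuclideanSpace ℝ (Fin n) → ℝ)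
    (g : EuclideanSpace ℝ (Fin n) → ℝ)
    (v : EuclideanSpace ℝ (Fin n) → ℝ) : Prop :=
  UpperSemicontinuousOn v (closure Ω) ∧
  ∀ φ : EuclideanSpace ℝ (Fin n) → ℝ, ContDiff ℝ 2 φ →
    ∀ x₀ ∈ closure Ω, IsLocalMaxOn (fun x => v x - φ x) (closure Ω) x₀ →
      MALower Ω f g x₀ (v x₀) (gradient φ x₀) (hessianMatrix φ x₀) ≤ 0

/-- Viscosity supersolution of the generalized Dirichlet problem on `closure Ω`. -/
def IsViscositySupersolution {n : ℕ} (Ω : Set (EuclideanSpace ℝ (Fin n)))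
    (f : EuclideanSpace ℝ (Fin n) → ℝ → EuclideanSpace ℝ (Fin n) → ℝ)
    (g : EuclideanSpace ℝ (Fin n) → ℝ)
    (w : EuclideanSpace ℝ (Fin n) → ℝ) : Prop :=
  LowerSemicontinuousOn w (closure Ω) ∧
  ∀ φ : EuclideanSpace ℝ (Fin n) → ℝ, ContDiff ℝ 2 φ →
    ∀ x₀ ∈ closure Ω, IsLocalMinOn (fun x => w x - φ x) (closure Ω) x₀ →
      0 ≤ MAUpper Ω f g x₀ (w x₀) (gradient φ x₀) (hessianMatrix φ x₀)

/-- A bounded open convex set is uniformly convex if every supporting hyperplane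
separates quadratically. -/
def UniformlyConvexDomain {n : ℕ} (Ω : Set (EuclideanSpace ℝ (Fin n))) : Prop :=
  ∀ x₀ ∈ frontier Ω, ∀ ν : EuclideanSpace ℝ (Fin n), ‖ν‖ = 1 →
    (∀ x ∈ closure Ω, ⟪ν, x - x₀⟫ ≤ 0) →
    ∃ α > 0, ∀ x ∈ closure Ω, ⟪ν, x - x₀⟫ ≤ -α * ‖x - x₀‖ ^ 2

/-- The subgradient of `w` at `x₀` relative to `closure Ω`. -/
def subgradient {n : ℕ} (Ω : Set (EuclideanSpace ℝ (Fin n)))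
    (w : EuclideanSpace ℝ (Fin n) → ℝ) (x₀ : EuclideanSpace ℝ (Fin n)) :
    Set (EuclideanSpace ℝ (Fin n)) :=
  {p | ∀ x ∈ closure Ω, w x₀ + ⟪p, x - x₀⟫ ≤ w x}

open scoped Matrix Topology

variable {n : ℕ}

noncomputable def innerBil (n : ℕ) :
    EuclideanSpace ℝ (Fin n) →L[ℝ] EuclideanSpace ℝ (Fin n) →L[ℝ] ℝ :=
  (isBoundedBilinearMap_inner (𝕜 := ℝ) (E := EuclideanSpace ℝ (Fin n))).toContinuousLinearMap

lemma innerBil_apply (x y : EuclideanSpace ℝ (Fin n)) : innerBil n x y = ⟪x, y⟫ := rfl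

noncomputable def testA (ν : EuclideanSpace ℝ (Fin n)) (K β : ℝ) :
    EuclideanSpace ℝ (Fin n) →L[ℝ] EuclideanSpace ℝ (Fin n) →L[ℝ] ℝ :=
  ((2*K) • (innerSL ℝ ν)).smulRight (innerSL ℝ ν) + (2*β) • innerBil n

lemma testA_apply (ν : EuclideanSpace ℝ (Fin n)) (K β : ℝ) (y m : EuclideanSpace ℝ (Fin n)) :
    testA ν K β y m = 2*K*⟪ν,y⟫*⟪ν,m⟫ + 2*β*⟪y,m⟫ := by
  simp only [testA, ContinuousLinearMap.add_apply, ContinuousLinearMap.smulRight_apply,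
    ContinuousLinearMap.smul_apply, innerSL_apply_apply, innerBil_apply, smul_eq_mul]

noncomputable def testφ (c ν x₀ : EuclideanSpace ℝ (Fin n)) (K β : ℝ) :
    EuclideanSpace ℝ (Fin n) → ℝ :=
  fun x => ⟪c, x - x₀⟫ + K * (⟪ν, x - x₀⟫ * ⟪ν, x - x₀⟫) + β * ⟪x - x₀, x - x₀⟫

lemma ContDiff.const_mul' {f : EuclideanSpace ℝ (Fin n) → ℝ} {m : ℕ∞} (h : ContDiff ℝ m f)
    (K : ℝ) : ContDiff ℝ m (fun x => K * f x) := contDiff_const.mul h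

lemma contDiff_testφ (c ν x₀ : EuclideanSpace ℝ (Fin n)) (K β : ℝ) :
    ContDiff ℝ 2 (testφ c ν x₀ K β) := by
  have hs : ContDiff ℝ 2 (fun x : EuclideanSpace ℝ (Fin n) => x - x₀) :=
    contDiff_id.sub contDiff_const
  exact ((ContDiff.inner ℝ contDiff_const hs).add
      ((ContDiff.inner ℝ contDiff_const hs).mul (ContDiff.inner ℝ contDiff_const hs)
        |>.const_mul' K)).add ((ContDiff.inner ℝ hs hs).const_mul' β)

lemma hasFDerivAt_testφ (c ν x₀ : EuclideanSpace ℝ (Fin n)) (K β : ℝ)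
    (y : EuclideanSpace ℝ (Fin n)) :
    HasFDerivAt (testφ c ν x₀ K β) (innerSL ℝ c + testA ν K β (y - x₀)) y := by
  have h0 : HasFDerivAt (fun x : EuclideanSpace ℝ (Fin n) => x - x₀)
      (ContinuousLinearMap.id ℝ (EuclideanSpace ℝ (Fin n))) y :=
    (hasFDerivAt_id y).sub_const x₀
  have h1 : HasFDerivAt (fun x : EuclideanSpace ℝ (Fin n) => ⟪c, x - x₀⟫) (innerSL ℝ c) y := by
    exact ((innerSL ℝ c).hasFDerivAt.comp y h0)
  have h2 : HasFDerivAt (fun x : EuclideanSpace ℝ (Fin n) => ⟪ν, x - x₀⟫) (innerSL ℝ ν) y := by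
    exact ((innerSL ℝ ν).hasFDerivAt.comp y h0)
  have h3 := (h2.mul h2).const_mul K
  have h4 := (HasFDerivAt.inner ℝ h0 h0).const_mul β
  have H := (h1.add h3).add h4
  have hD : innerSL ℝ c + testA ν K β (y - x₀) =
      innerSL ℝ c +
        K • (⟪ν, y - x₀⟫ • innerSL ℝ ν + ⟪ν, y - x₀⟫ • innerSL ℝ ν) +
        β • ((fderivInnerCLM ℝ (y - x₀, y - x₀)).comp
          ((ContinuousLinearMap.id ℝ (EuclideanSpace ℝ (Fin n))).prod
            (ContinuousLinearMap.id ℝ (EuclideanSpace ℝ (Fin n))))) := by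
    ext m
    simp only [ContinuousLinearMap.add_apply, testA_apply, ContinuousLinearMap.smul_apply,
      ContinuousLinearMap.comp_apply, ContinuousLinearMap.prod_apply, ContinuousLinearMap.id_apply,
      fderivInnerCLM_apply, innerSL_apply_apply, smul_eq_mul]
    rw [real_inner_comm m (y - x₀)]
    ring
  rw [hD]
  exact H

lemma fderiv_testφ (c ν x₀ : EuclideanSpace ℝ (Fin n)) (K β : ℝ) :
    fderiv ℝ (testφ c ν x₀ K β) = fun y => innerSL ℝ c + testA ν K β (y - x₀) :=
  funext fun y => (hasFDerivAt_testφ c ν x₀ K β y).fderiv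

lemma gradient_testφ (c ν x₀ : EuclideanSpace ℝ (Fin n)) (K β : ℝ) :
    gradient (testφ c ν x₀ K β) x₀ = c := by
  have h : HasFDerivAt (testφ c ν x₀ K β) (innerSL ℝ c) x₀ := by
    simpa using hasFDerivAt_testφ c ν x₀ K β x₀
  have he : (InnerProductSpace.toDual ℝ (EuclideanSpace ℝ (Fin n))).symm (innerSL ℝ c) = c := by
    have hc : innerSL ℝ c = InnerProductSpace.toDual ℝ (EuclideanSpace ℝ (Fin n)) c := by
      ext x; simp [InnerProductSpace.toDual_apply_apply]
    rw [hc]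
    exact LinearIsometryEquiv.symm_apply_apply _ _
  have := h.hasGradientAt
  rw [he] at this
  exact this.gradient

lemma fderiv2_testφ (c ν x₀ : EuclideanSpace ℝ (Fin n)) (K β : ℝ) :
    fderiv ℝ (fderiv ℝ (testφ c ν x₀ K β)) x₀ = testA ν K β := by
  rw [fderiv_testφ]
  have h1 : HasFDerivAt (fun y : EuclideanSpace ℝ (Fin n) =>
      innerSL ℝ c + testA ν K β (y - x₀)) (testA ν K β) x₀ := by
    have h : HasFDerivAt (fun y : EuclideanSpace ℝ (Fin n) =>
        testA ν K β y - testA ν K β x₀) (testA ν K β) x₀ :=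
      (testA ν K β).hasFDerivAt.sub_const _
    simpa [map_sub, sub_eq_add_neg, add_comm, add_left_comm, add_assoc] using h.const_add (innerSL ℝ c)
  exact h1.fderiv

lemma hessian_testφ (c ν x₀ : EuclideanSpace ℝ (Fin n)) (K β : ℝ) :
    hessianMatrix (testφ c ν x₀ K β) x₀ =
      (2*K) • Matrix.vecMulVec (fun i => ν i) (fun i => ν i) +
        (2*β) • (1 : Matrix (Fin n) (Fin n) ℝ) := by
  ext i j
  show iteratedFDeriv ℝ 2 (testφ c ν x₀ K β) x₀ ![_, _] = _
  rw [iteratedFDeriv_two_apply, fderiv2_testφ]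
  simp only [Matrix.cons_val_zero, Matrix.cons_val_one, Matrix.head_cons, testA_apply]
  have h1 : ⟪ν, EuclideanSpace.single i (1:ℝ)⟫ = ν i := by
    simp [EuclideanSpace.inner_single_right]
  have h2 : ⟪ν, EuclideanSpace.single j (1:ℝ)⟫ = ν j := by
    simp [EuclideanSpace.inner_single_right]
  have h3 : ⟪EuclideanSpace.single i (1:ℝ), EuclideanSpace.single j (1:ℝ)⟫
      = if i = j then (1:ℝ) else 0 := by
    simp [EuclideanSpace.inner_single_left, EuclideanSpace.single_apply, eq_comm]
  rw [h1, h2, h3]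
  simp [Matrix.vecMulVec_apply, Matrix.one_apply]
  ring

lemma posSemidef_X (ν' : Fin n → ℝ) (K β : ℝ) (hK : 0 ≤ K) (hβ : 0 ≤ β) :
    ((2*K) • Matrix.vecMulVec ν' ν' + (2*β) • (1 : Matrix (Fin n) (Fin n) ℝ)).PosSemidef := by
  have h1 : (2*K) • Matrix.vecMulVec ν' ν'
      = Matrix.conjTranspose (Matrix.replicateRow Unit (Real.sqrt (2*K) • ν')) * Matrix.replicateRow Unit (Real.sqrt (2*K) • ν') := by
    rw [Matrix.conjTranspose_replicateRow, ← Matrix.vecMulVec_eq]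
    ext i j
    simp only [Matrix.smul_apply, Matrix.vecMulVec_apply, Pi.smul_apply, smul_eq_mul,
      Pi.star_apply, star_trivial]
    rw [show Real.sqrt (2*K) * ν' i * (Real.sqrt (2*K) * ν' j)
        = (Real.sqrt (2*K) * Real.sqrt (2*K)) * (ν' i * ν' j) from by ring,
      Real.mul_self_sqrt (by linarith)]
  have h2 : (2*β) • (1 : Matrix (Fin n) (Fin n) ℝ)
      = Matrix.diagonal (fun _ => 2*β) := by
    ext i j
    simp [Matrix.one_apply, Matrix.diagonal, Matrix.smul_apply]
  rw [h1, h2]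
  exact (Matrix.posSemidef_conjTranspose_mul_self _).add
    (Matrix.PosSemidef.diagonal (fun i => by dsimp; linarith))

lemma det_X (ν' : Fin n → ℝ) (hν : ∑ i, ν' i ^ 2 = 1) (K β : ℝ) (hβ : 0 < β) :
    ((2*K) • Matrix.vecMulVec ν' ν' + (2*β) • (1 : Matrix (Fin n) (Fin n) ℝ)).det
      = (2*β)^n * (1 + K/β) := by
  have hX : (2*K) • Matrix.vecMulVec ν' ν' + (2*β) • (1 : Matrix (Fin n) (Fin n) ℝ)
      = (2*β) • ((1 : Matrix (Fin n) (Fin n) ℝ)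
          + Matrix.replicateCol Unit ((β⁻¹ * K) • ν') * Matrix.replicateRow Unit ν') := by
    rw [← Matrix.vecMulVec_eq]
    ext i j
    simp only [Matrix.add_apply, Matrix.smul_apply, Matrix.vecMulVec_apply, Pi.smul_apply,
      smul_eq_mul, Matrix.one_apply]
    split <;> field_simp <;> ring
  rw [hX, Matrix.det_smul, Matrix.det_one_add_replicateCol_mul_replicateRow]
  have : ν' ⬝ᵥ (β⁻¹ * K) • ν' = β⁻¹ * K := by
    simp only [dotProduct, Pi.smul_apply, smul_eq_mul]
    rw [show ∀ x : Fin n → ℝ, (∑ i, x i * ((β⁻¹*K) * x i)) = (β⁻¹*K) * ∑ i, x i ^2 from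
      fun x => by rw [Finset.mul_sum]; congr 1; ext i; ring]
    rw [hν, mul_one]
  rw [this]
  simp only [Fintype.card_fin]
  congr 1
  field_simp

set_option maxHeartbeats 2000000 in
/-- **Behaviour of supersolutions at the boundary**: at each boundary point, a viscosity
supersolution of the generalized Dirichlet problem either dominates the boundary data or
has empty subgradient. -/
theorem supersolution_boundary_behaviour
    {n : ℕ}
    (Ω : Set (EuclideanSpace ℝ (Fin n)))
    (hΩ_open : IsOpen Ω) (hΩ_bdd : Bornology.IsBounded Ω)
    (hΩ_conv : Convex ℝ Ω) (hΩ_uc : UniformlyConvexDomain Ω)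
    (f : EuclideanSpace ℝ (Fin n) → ℝ → EuclideanSpace ℝ (Fin n) → ℝ)
    (hf_cont : ContinuousOn
      (fun q : EuclideanSpace ℝ (Fin n) × ℝ × EuclideanSpace ℝ (Fin n) => f q.1 q.2.1 q.2.2)
      ((closure Ω) ×ˢ (Set.univ ×ˢ Set.univ)))
    (g : EuclideanSpace ℝ (Fin n) → ℝ) (hg : ContinuousOn g (frontier Ω))
    (w : EuclideanSpace ℝ (Fin n) → ℝ)
    (hw_super : IsViscositySupersolution Ω f g w) :
    ∀ x₀ ∈ frontier Ω, g x₀ ≤ w x₀ ∨ subgradient Ω w x₀ = ∅ := by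
  intro x₀ hx₀
  by_cases hsub : subgradient Ω w x₀ = ∅
  · exact Or.inr hsub
  left
  obtain ⟨p, hp⟩ := Set.nonempty_iff_ne_empty.mpr hsub
  have hx₀c : x₀ ∈ closure Ω := frontier_subset_closure hx₀
  have hx₀Ω : x₀ ∉ Ω := by
    have h := hx₀
    rw [hΩ_open.frontier_eq] at h
    exact h.2
  have hne : Ω.Nonempty := by
    rcases Ω.eq_empty_or_nonempty with h | h
    · exfalso; rw [h] at hx₀c; simp at hx₀c
    · exact h
  -- supporting hyperplane
  obtain ⟨F, hF⟩ := geometric_hahn_banach_open_point hΩ_conv hΩ_open hx₀Ω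
  have hF0 : F ≠ 0 := by
    obtain ⟨a, ha⟩ := hne
    intro h
    have := hF a ha
    rw [h] at this
    simp at this
  set v := (InnerProductSpace.toDual ℝ (EuclideanSpace ℝ (Fin n))).symm F with hvdef
  have hv : ∀ y, ⟪v, y⟫ = F y := fun y => InnerProductSpace.toDual_symm_apply
  have hv0 : v ≠ 0 := by
    intro h
    apply hF0
    rwa [hvdef, LinearIsometryEquiv.map_eq_zero_iff] at h
  set ν := ‖v‖⁻¹ • v with hνdef
  have hν1 : ‖ν‖ = 1 := norm_smul_inv_norm hv0
  have hcont : Continuous fun x : EuclideanSpace ℝ (Fin n) => ⟪ν, x - x₀⟫ :=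
    Continuous.inner continuous_const (continuous_id.sub continuous_const)
  have hνle : ∀ x ∈ closure Ω, ⟪ν, x - x₀⟫ ≤ 0 := by
    intro x hx
    have hcl : closure Ω ⊆ {x | ⟪ν, x - x₀⟫ ≤ 0} := by
      apply closure_minimal
      · intro y hy
        have h1 : F y < F x₀ := hF y hy
        have h2 : ⟪ν, y - x₀⟫ = ‖v‖⁻¹ * (F y - F x₀) := by
          rw [hνdef, real_inner_smul_left, inner_sub_right, hv, hv]
        have h3 : (0:ℝ) < ‖v‖⁻¹ := inv_pos.mpr (norm_pos_iff.mpr hv0)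
        have : ⟪ν, y - x₀⟫ < 0 := by
          rw [h2]
          exact mul_neg_of_pos_of_neg h3 (by linarith)
        exact le_of_lt this
      · exact isClosed_le hcont continuous_const
    exact hcl hx
  obtain ⟨α, hα, hαle⟩ := hΩ_uc x₀ hx₀ ν hν1 hνle
  -- constants
  set M := f x₀ (w x₀) (p + ν) with hM
  set β : ℝ := α / 2 with hβdef
  have hβ : 0 < β := by rw [hβdef]; linarith
  set P : ℝ := (2*β)^n with hPdef
  have hP : 0 < P := by rw [hPdef]; positivity
  set K : ℝ := (max M 0 + 1) * β / P with hKdef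
  have hK : 0 < K := by rw [hKdef]; positivity
  set φ := testφ (p + ν) ν x₀ K β with hφdef
  have hφx₀ : φ x₀ = 0 := by
    simp [hφdef, testφ]
  -- local minimum
  have hmin : IsLocalMinOn (fun x => w x - φ x) (closure Ω) x₀ := by
    have hUmem : {x : EuclideanSpace ℝ (Fin n) | -(1/(2*K)) < ⟪ν, x - x₀⟫} ∈ 𝓝 x₀ := by
      apply IsOpen.mem_nhds (isOpen_lt continuous_const hcont)
      simp only [Set.mem_setOf_eq, sub_self, inner_zero_right]
      have : (0:ℝ) < 1/(2*K) := by positivity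
      linarith
    apply Filter.eventually_iff_exists_mem.mpr
    refine ⟨_, Filter.inter_mem (mem_nhdsWithin_of_mem_nhds hUmem) self_mem_nhdsWithin, ?_⟩
    rintro x ⟨hxU, hxΩ⟩
    simp only [Set.mem_setOf_eq] at hxU
    have hwx : w x₀ + ⟪p, x - x₀⟫ ≤ w x := hp x hxΩ
    set t := ⟪ν, x - x₀⟫ with htdef
    set r2 := ‖x - x₀‖^2 with hr2def
    have hr2 : (0:ℝ) ≤ r2 := by positivity
    have ht : t ≤ -α * r2 := hαle x hxΩ
    have hφx : φ x = ⟪p, x - x₀⟫ + (t + K * t^2 + β * r2) := by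
      rw [hφdef, testφ]
      rw [inner_add_left, real_inner_self_eq_norm_sq]
      ring
    have hKt : -(1/2 : ℝ) < K * t := by
      have h1 := mul_lt_mul_of_pos_left hxU hK
      have h2 : K * -(1/(2*K)) = -(1/2 : ℝ) := by field_simp
      rwa [h2] at h1
    have htneg : t ≤ 0 := le_trans ht (by nlinarith)
    have hKt2 : K * t^2 ≤ -t/2 := by nlinarith [mul_nonneg (by linarith : (0:ℝ) ≤ -t) (by linarith : (0:ℝ) ≤ K*t + 1/2)]
    have hquad : t + K * t^2 + β * r2 ≤ 0 := by
      rw [hβdef]; nlinarith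
    have : φ x ≤ ⟪p, x - x₀⟫ := by rw [hφx]; linarith
    simp only [hφx₀, sub_zero]
    linarith
  have hsuper := hw_super.2 φ (contDiff_testφ _ _ _ _ _) x₀ hx₀c hmin
  rw [hφdef] at hsuper
  rw [gradient_testφ, hessian_testφ] at hsuper
  rw [MAUpper, if_neg hx₀Ω] at hsuper
  -- compute detPlus
  set X := (2*K) • Matrix.vecMulVec (fun i => ν i) (fun i => ν i) +
      (2*β) • (1 : Matrix (Fin n) (Fin n) ℝ) with hXdef
  have hpsd : X.PosSemidef := posSemidef_X _ _ _ (le_of_lt hK) (le_of_lt hβ)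
  have hνsum : ∑ i, (ν i)^2 = 1 := by
    have h := hν1
    rw [EuclideanSpace.norm_eq] at h
    have h2 : Real.sqrt (∑ i, ‖ν i‖^2) = 1 := by
      convert h using 3
    have := Real.sqrt_eq_one.mp h2
    simpa [Real.norm_eq_abs, sq_abs] using this
  have hdet : X.det = P * (1 + K/β) := by
    rw [hXdef, det_X _ hνsum _ _ hβ, hPdef]
  have hdetP : detPlus X = P * (1 + K/β) := by
    rw [detPlus, if_pos hpsd, hdet]
  have hdetbig : M < P * (1 + K/β) := by
    have h1 : P * (1 + K/β) = P + (max M 0 + 1) := by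
      rw [hKdef]
      field_simp
    have h2 : M ≤ max M 0 := le_max_left _ _
    rw [h1]; linarith
  -- conclude
  rw [hdetP] at hsuper
  rcases le_max_iff.mp hsuper with h | h
  · linarith
  · exfalso
    rw [← hM] at h
    linarith
end

section
/- Half-plane counterexample, supersolution part: Let Ω = {(x₁,x₂) ∈ ℝ² : x₁ > 0}, take f ≡ 0 and boundary data g ≡ 0 on ∂Ω = {x₁ = 0}. Define v : Ω̄ → ℝ by v(x) = 0 for x ∈ Ω and v(x) = −1 for x ∈ ∂Ω. Then v is lower semicontinuous and is a viscosity supersolution of the generalized Dirichlet problem F(x, D²u) = −det⁺(D²u) on Ω, u − 0 on ∂Ω. -/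
open scoped RealInnerProductSpace Classical

section Aux

open Topology Filter Set

variable {E : Type*} [NormedAddCommGroup E] [NormedSpace ℝ E]

lemma line_hasDerivAt (x₀ d : E) (t : ℝ) :
    HasDerivAt (fun t : ℝ => x₀ + t • d) d t := by
  simpa using (((hasDerivAt_id t).smul_const d).const_add x₀)

lemma deriv2_line {φ : E → ℝ} (hφ : ContDiff ℝ 2 φ) (x₀ d : E) :
    deriv (deriv (fun t : ℝ => φ (x₀ + t • d))) 0 = fderiv ℝ (fderiv ℝ φ) x₀ d d := by
  have hg' : deriv (fun t : ℝ => φ (x₀ + t • d)) = fun t => fderiv ℝ φ (x₀ + t • d) d := by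
    funext t
    exact (((hφ.differentiable (by norm_num) (x₀ + t • d)).hasFDerivAt).comp_hasDerivAt t
      (line_hasDerivAt x₀ d t)).deriv
  rw [hg']
  have hF : ContDiff ℝ 1 (fderiv ℝ φ) := hφ.fderiv_right (by norm_num)
  have h1 : HasDerivAt (fun t : ℝ => fderiv ℝ φ (x₀ + t • d))
      (fderiv ℝ (fderiv ℝ φ) (x₀ + (0:ℝ) • d) d) 0 :=
    ((hF.differentiable (by norm_num) (x₀ + (0:ℝ) • d)).hasFDerivAt).comp_hasDerivAt 0
      (line_hasDerivAt x₀ d 0)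
  have h2 := h1.clm_apply (hasDerivAt_const 0 d)
  simpa using h2.deriv

lemma contDiff_line {φ : E → ℝ} (hφ : ContDiff ℝ 2 φ) (x₀ d : E) :
    ContDiff ℝ 2 (fun t : ℝ => φ (x₀ + t • d)) := by
  apply hφ.comp
  exact contDiff_const.add (contDiff_id.smul contDiff_const)

lemma second_deriv_nonpos {g : ℝ → ℝ} (hg : ContDiff ℝ 2 g) (hmax : IsLocalMax g 0) :
    deriv (deriv g) 0 ≤ 0 := by
  by_contra hc
  push_neg at hc
  have h0 : deriv g 0 = 0 := hmax.deriv_eq_zero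
  have hg1 : ContDiff ℝ 1 (deriv g) := (contDiff_succ_iff_deriv.mp (by exact_mod_cast hg)).2.2
  have hd : HasDerivAt (deriv g) (deriv (deriv g) 0) 0 :=
    (hg1.differentiable (by norm_num) 0).hasDerivAt
  rw [hasDerivAt_iff_tendsto_slope] at hd
  have hev : ∀ᶠ t in 𝓝[≠] (0:ℝ), 0 < slope (deriv g) 0 t :=
    hd.eventually (eventually_gt_nhds hc)
  have hev' : ∀ᶠ t in 𝓝[>] (0:ℝ), 0 < deriv g t := by
    filter_upwards [nhdsWithin_mono 0 (fun t (ht : t ∈ Set.Ioi (0:ℝ)) =>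
      (ne_of_gt ht : t ≠ 0)) hev, self_mem_nhdsWithin] with t h1 (h2 : (0:ℝ) < t)
    rw [slope_def_field, h0, sub_zero, sub_zero] at h1
    exact (div_pos_iff.mp h1).resolve_right (fun h => absurd h2 (not_lt.2 h.2.le)) |>.1
  obtain ⟨δ, hδ, hIoo⟩ := (nhdsGT_basis (0:ℝ)).eventually_iff.mp hev'
  have hmono : StrictMonoOn g (Set.Icc 0 δ) := by
    apply strictMonoOn_of_deriv_pos (convex_Icc 0 δ)
    · exact (hg.continuous).continuousOn
    · intro x hx
      rw [interior_Icc] at hx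
      exact hIoo ⟨hx.1, hx.2⟩
  have hfreq : ∃ t, t ∈ Set.Ioo 0 δ ∧ g t ≤ g 0 := by
    have h1 : ∀ᶠ t in 𝓝[>] (0:ℝ), g t ≤ g 0 := nhdsWithin_le_nhds hmax
    have h2 : ∀ᶠ t in 𝓝[>] (0:ℝ), t ∈ Set.Ioo 0 δ :=
      (nhdsGT_basis (0:ℝ)).eventually_iff.mpr ⟨δ, hδ, fun t ht => ht⟩
    exact (h2.and h1).exists
  obtain ⟨t, ht, hle⟩ := hfreq
  exact absurd (hmono ⟨le_rfl, hδ.le⟩ ⟨ht.1.le, ht.2.le⟩ ht.1) (not_lt.2 hle)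

/-- Key lemma: if `φ` has a local max along the vertical line through `x₀`, then
`detPlus` of its Hessian is nonpositive. -/
lemma detPlus_hessian_nonpos {φ : EuclideanSpace ℝ (Fin 2) → ℝ} (hφ : ContDiff ℝ 2 φ)
    (x₀ : EuclideanSpace ℝ (Fin 2))
    (h : IsLocalMax (fun t : ℝ => φ (x₀ + t • (EuclideanSpace.single (1 : Fin 2) (1:ℝ)))) 0) :
    detPlus (hessianMatrix φ x₀) ≤ 0 := by
  set e : EuclideanSpace ℝ (Fin 2) := EuclideanSpace.single (1 : Fin 2) (1:ℝ) with he
  set X := hessianMatrix φ x₀ with hX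
  by_cases hpsd : X.PosSemidef
  · rw [detPlus, if_pos hpsd]
    have hXe : X 1 1 = fderiv ℝ (fderiv ℝ φ) x₀ e e := by
      rw [hX, hessianMatrix]
      show iteratedFDeriv ℝ 2 φ x₀ ![e, e] = _
      rw [iteratedFDeriv_two_apply]
      simp
    have h11le : X 1 1 ≤ 0 := by
      have h2 := second_deriv_nonpos (contDiff_line hφ x₀ e) h
      rwa [deriv2_line hφ x₀ e, ← hXe] at h2
    have h11ge : 0 ≤ X 1 1 := by
      have := hpsd.dotProduct_mulVec_nonneg (Pi.single 1 1)
      simpa [dotProduct, Matrix.mulVec, Fin.sum_univ_two, Pi.single_apply] using this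
    have h11 : X 1 1 = 0 := le_antisymm h11le h11ge
    have hsym : X 1 0 = X 0 1 := by
      have := hpsd.1.apply 0 1
      simpa using this
    rw [Matrix.det_fin_two, h11, hsym]
    nlinarith [sq_nonneg (X 0 1)]
  · rw [detPlus, if_neg hpsd]; norm_num

end Aux

open Topology Filter Set

section MainAux

lemma proj0_continuous : Continuous fun x : EuclideanSpace ℝ (Fin 2) => x 0 :=
  (EuclideanSpace.proj (0 : Fin 2)).continuous

lemma halfplane_isOpen : IsOpen {x : EuclideanSpace ℝ (Fin 2) | 0 < x 0} :=
  isOpen_Ioi.preimage proj0_continuous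

lemma halfplane_closure_subset :
    closure {x : EuclideanSpace ℝ (Fin 2) | 0 < x 0} ⊆ {x | 0 ≤ x 0} :=
  closure_minimal (fun x hx => le_of_lt (show (0:ℝ) < x 0 from hx)) (isClosed_Ici.preimage proj0_continuous)

lemma halfplane_subset_closure :
    {x : EuclideanSpace ℝ (Fin 2) | 0 ≤ x 0} ⊆
      closure {x : EuclideanSpace ℝ (Fin 2) | 0 < x 0} := by
  intro x hx
  rw [Metric.mem_closure_iff]
  intro ε hε
  refine ⟨x + (ε/2) • EuclideanSpace.single (0 : Fin 2) (1:ℝ), ?_, ?_⟩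
  · show 0 < (x + (ε/2) • EuclideanSpace.single (0 : Fin 2) (1:ℝ)) 0
    have : (x + (ε/2) • EuclideanSpace.single (0 : Fin 2) (1:ℝ)) 0 = x 0 + ε/2 := by
      simp [EuclideanSpace.single_apply]
    rw [this]
    have : (0:ℝ) ≤ x 0 := hx
    linarith
  · rw [dist_eq_norm]
    have : x - (x + (ε/2) • EuclideanSpace.single (0 : Fin 2) (1:ℝ)) =
        -((ε/2) • EuclideanSpace.single (0 : Fin 2) (1:ℝ)) := by abel
    rw [this, norm_neg, norm_smul, EuclideanSpace.norm_single]
    simp only [norm_one, mul_one, Real.norm_eq_abs]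
    rw [abs_of_pos (by linarith)]
    linarith

lemma halfplane_lsc :
    LowerSemicontinuousOn
      (fun x : EuclideanSpace ℝ (Fin 2) => if 0 < x 0 then (0:ℝ) else -1)
      (closure {x : EuclideanSpace ℝ (Fin 2) | 0 < x 0}) := by
  intro x hx y hy
  by_cases hx0 : 0 < x 0
  · simp only [if_pos hx0] at hy
    have hmem : {z : EuclideanSpace ℝ (Fin 2) | 0 < z 0} ∈
        𝓝[closure {x : EuclideanSpace ℝ (Fin 2) | 0 < x 0}] x :=
      nhdsWithin_le_nhds (halfplane_isOpen.mem_nhds hx0)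
    filter_upwards [hmem] with z hz
    simpa [if_pos hz] using hy
  · simp only [if_neg hx0] at hy
    filter_upwards with z
    by_cases hz : 0 < z 0
    · simp only [if_pos hz]; linarith
    · simp only [if_neg hz]; exact hy

end MainAux

/-- **Half-plane counterexample, supersolution part**: on the half-plane
`Ω = {x₁ > 0} ⊂ ℝ²` with `f ≡ 0` and `g ≡ 0`, the function equal to `0` on `Ω` and `-1`
on `∂Ω` is lower semicontinuous and is a viscosity supersolution of the generalized
Dirichlet problem. -/
theorem halfplane_supersolution :
    LowerSemicontinuousOn
      (fun x : EuclideanSpace ℝ (Fin 2) => if 0 < x 0 then (0:ℝ) else -1)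
      (closure {x : EuclideanSpace ℝ (Fin 2) | 0 < x 0}) ∧
    IsViscositySupersolution {x : EuclideanSpace ℝ (Fin 2) | 0 < x 0}
      (fun _ _ _ => 0) (fun _ => 0)
      (fun x => if 0 < x 0 then (0:ℝ) else -1) := by
  refine ⟨halfplane_lsc, halfplane_lsc, ?_⟩
  intro φ hφ x₀ hx₀ hmin
  set Ω : Set (EuclideanSpace ℝ (Fin 2)) := {x | 0 < x 0} with hΩdef
  set e : EuclideanSpace ℝ (Fin 2) := EuclideanSpace.single (1 : Fin 2) (1:ℝ) with he
  have hcont : Continuous (fun t : ℝ => x₀ + t • e) :=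
    continuous_const.add (continuous_id.smul continuous_const)
  have hL0 : x₀ + (0:ℝ) • e = x₀ := by simp
  have hmin' : ∀ᶠ x in 𝓝[closure Ω] x₀,
      (if 0 < x₀ 0 then (0:ℝ) else -1) - φ x₀ ≤ (if 0 < x 0 then (0:ℝ) else -1) - φ x := hmin
  have hlm : IsLocalMax (fun t : ℝ => φ (x₀ + t • e)) 0 := by
    by_cases hΩ0 : 0 < x₀ 0
    · have hnb : closure Ω ∈ 𝓝 x₀ :=
        Filter.mem_of_superset (halfplane_isOpen.mem_nhds hΩ0) subset_closure
      have heq : 𝓝[closure Ω] x₀ = 𝓝 x₀ := nhdsWithin_eq_nhds.mpr hnb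
      rw [heq] at hmin'
      have hmaxφ : ∀ᶠ x in 𝓝 x₀, φ x ≤ φ x₀ := by
        filter_upwards [hmin', halfplane_isOpen.mem_nhds hΩ0] with x h1 h2
        rw [if_pos hΩ0, if_pos h2] at h1
        linarith
      have hT : Filter.Tendsto (fun t : ℝ => x₀ + t • e) (𝓝 0) (𝓝 x₀) := by
        simpa [hL0] using hcont.tendsto 0
      have := hT.eventually hmaxφ
      show ∀ᶠ t in 𝓝 (0:ℝ), φ (x₀ + t • e) ≤ φ (x₀ + (0:ℝ) • e)
      rw [hL0]
      exact this
    · have hx00 : x₀ 0 = 0 := le_antisymm (not_lt.1 hΩ0) (halfplane_closure_subset hx₀)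
      have hLcoord : ∀ t : ℝ, (x₀ + t • e) 0 = 0 := by
        intro t
        have : (x₀ + t • e) 0 = x₀ 0 + t * e 0 := rfl
        rw [this, hx00, he]
        simp [EuclideanSpace.single_apply]
      have hLmem : ∀ t : ℝ, (x₀ + t • e) ∈ closure Ω := fun t =>
        halfplane_subset_closure (by rw [Set.mem_setOf_eq, hLcoord t])
      have hT : Filter.Tendsto (fun t : ℝ => x₀ + t • e) (𝓝 0) (𝓝[closure Ω] x₀) := by
        rw [tendsto_nhdsWithin_iff]
        exact ⟨by simpa [hL0] using hcont.tendsto 0, Filter.Eventually.of_forall hLmem⟩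
      have hev := hT.eventually hmin'
      show ∀ᶠ t in 𝓝 (0:ℝ), φ (x₀ + t • e) ≤ φ (x₀ + (0:ℝ) • e)
      rw [hL0]
      filter_upwards [hev] with t ht
      rw [if_neg hΩ0, if_neg (by rw [hLcoord t]; exact lt_irrefl 0)] at ht
      linarith
  have hdet : detPlus (hessianMatrix φ x₀) ≤ 0 := detPlus_hessian_nonpos hφ x₀ hlm
  by_cases hΩ0 : x₀ ∈ Ω
  · rw [MAUpper, if_pos hΩ0]
    linarith
  · rw [MAUpper, if_neg hΩ0]
    refine le_trans ?_ (le_max_right _ _)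
    linarith
end

section
/- Failure of the strong comparison principle on the half-plane: Let Ω = {(x₁,x₂) ∈ ℝ² : x₁ > 0} with f ≡ 0 and g ≡ 0. The function u ≡ 0 on Ω̄ is a viscosity subsolution of the generalized Dirichlet problem, the function v defined by v(x) = 0 for x ∈ Ω and v(x) = −1 for x ∈ ∂Ω is a viscosity supersolution, and u(x₀) = 0 > −1 = v(x₀) for every x₀ ∈ ∂Ω; hence there exist a viscosity subsolution u and a viscosity supersolution v of the generalized Dirichlet problem with u(x₀) > v(x₀) at some point of Ω̄. -/
open scoped RealInnerProductSpace Classical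

/-!
At a point of `Ω` where a test function `φ` touches `u ≡ 0` from above, `φ` has a local minimum,
so `D²φ` is positive semidefinite and `-det⁺ D²φ ≤ 0`; on `∂Ω` the relaxed condition
`min {u, -det⁺} ≤ u = 0` holds for free. The jump function `v` depends only on `x₁`, so a test
function touching it from below has a local maximum along every vertical line through the contact
point, giving `∂₂₂φ ≤ 0`. A positive semidefinite matrix with a nonpositive diagonal entry is
singular, so `-det⁺ D²φ ≥ 0` at every point of `Ω̄`, which is all that `F*` asks for, even on `∂Ω`
where `v = -1` violates the boundary condition.
-/

open Filter Topology

/-- If `g'' a < 0`, the second derivative test makes `a` also a local maximum, so `g` is locally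
constant and `g'' a = 0`. -/
theorem IsLocalMin.deriv_deriv_nonneg {g : ℝ → ℝ} {a : ℝ} (h : IsLocalMin g a)
    (hg : ContinuousAt g a) : 0 ≤ deriv (deriv g) a := by
  by_contra! hneg
  have hmax := isLocalMax_of_deriv_deriv_neg hneg h.deriv_eq_zero hg
  have hconst : g =ᶠ[𝓝 a] fun _ => g a := (h.and hmax).mono fun _ hy => le_antisymm hy.2 hy.1
  rw [hconst.deriv.deriv_eq] at hneg
  simp at hneg

theorem IsLocalMax.deriv_deriv_nonpos {g : ℝ → ℝ} {a : ℝ} (h : IsLocalMax g a)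
    (hg : ContinuousAt g a) : deriv (deriv g) a ≤ 0 := by
  by_contra! hpos
  have hmin := isLocalMin_of_deriv_deriv_pos hpos h.deriv_eq_zero hg
  have hconst : g =ᶠ[𝓝 a] fun _ => g a := (h.and hmin).mono fun _ hy => le_antisymm hy.1 hy.2
  rw [hconst.deriv.deriv_eq] at hpos
  simp at hpos

section SecondOrderConditions

variable {E : Type*} [NormedAddCommGroup E] [NormedSpace ℝ E] {φ : E → ℝ}

theorem ContDiff.deriv_deriv_comp_add_smul (hφ : ContDiff ℝ 2 φ) (x v : E) :
    deriv (deriv fun t : ℝ => φ (x + t • v)) 0 = iteratedFDeriv ℝ 2 φ x ![v, v] := by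
  have hline : ∀ t : ℝ, HasDerivAt (fun t : ℝ => x + t • v) v t := fun t => by
    simpa using ((hasDerivAt_id t).smul_const v).const_add x
  have hderiv : deriv (fun t : ℝ => φ (x + t • v)) = fun t => fderiv ℝ φ (x + t • v) v :=
    funext fun t =>
      ((hφ.differentiable two_ne_zero _).hasFDerivAt.comp_hasDerivAt t (hline t)).deriv
  have hφ' : HasFDerivAt (fderiv ℝ φ) (fderiv ℝ (fderiv ℝ φ) x) (x + (0 : ℝ) • v) := by
    simpa using ((hφ.fderiv_right (m := 1) le_rfl).differentiable one_ne_zero x).hasFDerivAt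
  rw [hderiv, iteratedFDeriv_two_apply]
  exact ((ContinuousLinearMap.apply ℝ ℝ v).hasFDerivAt.comp_hasDerivAt 0
    (hφ'.comp_hasDerivAt 0 (hline 0))).deriv

theorem ContDiff.iteratedFDeriv_two_nonneg_of_isLocalMin_comp_add_smul
    (hφ : ContDiff ℝ 2 φ) {x v : E} (h : IsLocalMin (fun t : ℝ => φ (x + t • v)) 0) :
    0 ≤ iteratedFDeriv ℝ 2 φ x ![v, v] :=
  hφ.deriv_deriv_comp_add_smul x v ▸ h.deriv_deriv_nonneg (by have := hφ.continuous; fun_prop)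

theorem ContDiff.iteratedFDeriv_two_nonpos_of_isLocalMax_comp_add_smul
    (hφ : ContDiff ℝ 2 φ) {x v : E} (h : IsLocalMax (fun t : ℝ => φ (x + t • v)) 0) :
    iteratedFDeriv ℝ 2 φ x ![v, v] ≤ 0 :=
  hφ.deriv_deriv_comp_add_smul x v ▸ h.deriv_deriv_nonpos (by have := hφ.continuous; fun_prop)

theorem IsLocalMin.comp_add_smul {x : E} (h : IsLocalMin φ x) (v : E) :
    IsLocalMin (fun t : ℝ => φ (x + t • v)) 0 :=
  IsLocalMin.comp_continuous (g := fun t : ℝ => x + t • v) (by simpa using h) (by fun_prop)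

end SecondOrderConditions

theorem IsLocalMin.hessianMatrix_posSemidef {n : ℕ} {φ : EuclideanSpace ℝ (Fin n) → ℝ}
    {x : EuclideanSpace ℝ (Fin n)} (hφ : ContDiff ℝ 2 φ) (h : IsLocalMin φ x) :
    (hessianMatrix φ x).PosSemidef := by
  have hsymm := (hφ.contDiffAt (x := x)).isSymmSndFDerivAt (by simp)
  refine Matrix.posSemidef_iff_dotProduct_mulVec.mpr ⟨?_, fun y => ?_⟩
  · ext i j
    simp [hessianMatrix, iteratedFDeriv_two_apply, hsymm _ _]
  · have hq := hφ.iteratedFDeriv_two_nonneg_of_isLocalMin_comp_add_smul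
      (h.comp_add_smul (WithLp.toLp 2 y))
    have hw : WithLp.toLp 2 y = ∑ i, y i • EuclideanSpace.single i (1 : ℝ) := by
      ext k; simp [Pi.single_apply]
    rw [iteratedFDeriv_two_apply, hw] at hq
    simp only [Matrix.cons_val_zero, Matrix.cons_val_one, map_sum, map_smul,
      FunLike.coe_sum, Finset.sum_apply, FunLike.coe_smul,
      Pi.smul_apply, smul_eq_mul] at hq
    refine hq.trans_eq (Finset.sum_congr rfl fun i _ => ?_)
    simp only [star_trivial, Matrix.mulVec, dotProduct, Finset.mul_sum]
    refine Finset.sum_congr rfl fun j _ => ?_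
    rw [hessianMatrix, Matrix.of_apply, iteratedFDeriv_two_apply, hsymm]
    simp only [Matrix.cons_val_zero, Matrix.cons_val_one]
    ring

section DetPlus

open Matrix

variable {n : ℕ} {X : Matrix (Fin n) (Fin n) ℝ}

theorem Matrix.PosSemidef.detPlus_nonneg (hX : X.PosSemidef) : 0 ≤ detPlus X := by
  rw [detPlus, if_pos hX]
  exact hX.det_nonneg

/-- A positive semidefinite matrix with a vanishing diagonal entry kills the corresponding basis
vector, hence is singular. -/
theorem detPlus_nonpos_of_apply_self_nonpos {i : Fin n} (hXi : X i i ≤ 0) : detPlus X ≤ 0 := by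
  unfold detPlus
  split_ifs with hX
  · have hquad : star (Pi.single i 1) ⬝ᵥ X *ᵥ Pi.single i (1 : ℝ) = 0 := by
      simpa using le_antisymm hXi hX.diag_nonneg
    have hdet : X.det = 0 := Matrix.exists_mulVec_eq_zero_iff.mp
      ⟨Pi.single i 1, by simp, (hX.dotProduct_mulVec_zero_iff _).mp hquad⟩
    exact hdet.le
  · norm_num

end DetPlus

section Envelopes

variable {n : ℕ} {Ω : Set (EuclideanSpace ℝ (Fin n))}
  {f : EuclideanSpace ℝ (Fin n) → ℝ → EuclideanSpace ℝ (Fin n) → ℝ}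
  {g : EuclideanSpace ℝ (Fin n) → ℝ} {x p : EuclideanSpace ℝ (Fin n)} {u : ℝ}
  {X : Matrix (Fin n) (Fin n) ℝ}

theorem MALower_of_mem (hx : x ∈ Ω) : MALower Ω f g x u p X = -detPlus X + f x u p :=
  if_pos hx

theorem MALower_le_of_notMem (hx : x ∉ Ω) : MALower Ω f g x u p X ≤ u - g x := by
  rw [MALower, if_neg hx]
  exact min_le_left _ _

theorem le_MAUpper : -detPlus X + f x u p ≤ MAUpper Ω f g x u p X := by
  unfold MAUpper
  split_ifs
  exacts [le_rfl, le_max_right _ _]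

end Envelopes

theorem isOpen_setOf_pos_apply {n : ℕ} (i : Fin n) :
    IsOpen {x : EuclideanSpace ℝ (Fin n) | 0 < x i} :=
  isOpen_lt continuous_const (by fun_prop)

theorem isViscositySubsolution_zero {n : ℕ} {Ω : Set (EuclideanSpace ℝ (Fin n))}
    (hΩ : IsOpen Ω) :
    IsViscositySubsolution Ω (fun _ _ _ => 0) (fun _ => 0) (fun _ => 0) := by
  refine ⟨continuousOn_const.upperSemicontinuousOn, fun φ hφ x₀ _ hmax => ?_⟩
  by_cases hx : x₀ ∈ Ω
  · have hmin : IsLocalMin φ x₀ := by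
      simpa using (hmax.isLocalMax (mem_of_superset (hΩ.mem_nhds hx) subset_closure)).neg
    rw [MALower_of_mem hx]
    linarith [(hmin.hessianMatrix_posSemidef hφ).detPlus_nonneg]
  · exact (MALower_le_of_notMem hx).trans_eq (sub_self 0)

theorem isViscositySupersolution_ite_halfSpace {n : ℕ} {i j : Fin n} (hij : i ≠ j) :
    IsViscositySupersolution {x : EuclideanSpace ℝ (Fin n) | 0 < x i} (fun _ _ _ => 0)
      (fun _ => 0) (fun x => if 0 < x i then (0 : ℝ) else -1) := by
  set Ω := {x : EuclideanSpace ℝ (Fin n) | 0 < x i}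
  set w : EuclideanSpace ℝ (Fin n) → ℝ := fun x => if 0 < x i then 0 else -1
  refine ⟨?_, fun φ hφ x₀ hx₀ hmin => ?_⟩
  · have hw : w = Ωᶜ.indicator fun _ => -1 := by
      ext x
      by_cases hx : 0 < x i <;> simp [w, Ω, hx]
    rw [hw]
    exact ((isOpen_setOf_pos_apply i).isClosed_compl.lowerSemicontinuous_indicator
      (by norm_num)).lowerSemicontinuousOn _
  set line : ℝ → EuclideanSpace ℝ (Fin n) := fun t => x₀ + t • EuclideanSpace.single j 1
  have hline_i : ∀ t, line t i = x₀ i := fun t => by simp [line, hij]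
  have hline_mem : ∀ t, line t ∈ closure Ω := fun t => by
    simpa [Ω, hline_i] using hx₀
  have htendsto : Tendsto line (𝓝 0) (𝓝[closure Ω] x₀) :=
    tendsto_nhdsWithin_iff.mpr ⟨by simpa [line] using (by fun_prop : Continuous line).tendsto 0,
      Eventually.of_forall hline_mem⟩
  have hmax : IsLocalMax (fun t => φ (line t)) 0 := by
    filter_upwards [htendsto.eventually hmin] with t ht
    have ht' : w x₀ - φ x₀ ≤ w (line t) - φ (line t) := ht
    have hw : w (line t) = w x₀ := by simp only [w, hline_i]
    have hline_zero : line 0 = x₀ := by simp [line]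
    rw [hline_zero]
    linarith
  have hjj : hessianMatrix φ x₀ j j ≤ 0 :=
    hφ.iteratedFDeriv_two_nonpos_of_isLocalMax_comp_add_smul hmax
  calc 0 ≤ -detPlus (hessianMatrix φ x₀) + 0 := by
        linarith [detPlus_nonpos_of_apply_self_nonpos hjj]
    _ ≤ _ := le_MAUpper (f := fun _ _ _ => 0)

/-- **Failure of the strong comparison principle on the half-plane**: with `f ≡ 0` and
`g ≡ 0` on `Ω = {x₁ > 0} ⊂ ℝ²`, the zero function is a viscosity subsolution, the
function equal to `0` on `Ω` and `-1` on `∂Ω` is a viscosity supersolution, yet the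
subsolution strictly exceeds the supersolution at every boundary point. -/
theorem halfplane_strong_comparison_fails :
    IsViscositySubsolution {x : EuclideanSpace ℝ (Fin 2) | 0 < x 0}
      (fun _ _ _ => 0) (fun _ => 0) (fun _ => (0:ℝ)) ∧
    IsViscositySupersolution {x : EuclideanSpace ℝ (Fin 2) | 0 < x 0}
      (fun _ _ _ => 0) (fun _ => 0)
      (fun x => if 0 < x 0 then (0:ℝ) else -1) ∧
    (∀ x₀ ∈ frontier {x : EuclideanSpace ℝ (Fin 2) | 0 < x 0},
      (fun x : EuclideanSpace ℝ (Fin 2) => if 0 < x 0 then (0:ℝ) else -1) x₀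
        < (fun _ : EuclideanSpace ℝ (Fin 2) => (0:ℝ)) x₀) ∧
    (∃ x₀ ∈ closure {x : EuclideanSpace ℝ (Fin 2) | 0 < x 0},
      (fun x : EuclideanSpace ℝ (Fin 2) => if 0 < x 0 then (0:ℝ) else -1) x₀
        < (fun _ : EuclideanSpace ℝ (Fin 2) => (0:ℝ)) x₀) := by
  have hfrontier := (isOpen_setOf_pos_apply (0 : Fin 2)).frontier_eq
  have hgap : ∀ x₀ ∈ frontier {x : EuclideanSpace ℝ (Fin 2) | 0 < x 0},
      (if 0 < x₀ 0 then (0:ℝ) else -1) < 0 := fun x₀ hx₀ => by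
    rw [hfrontier] at hx₀
    have hnot : ¬ 0 < x₀ 0 := hx₀.2
    simp [hnot]
  have horigin : (0 : EuclideanSpace ℝ (Fin 2)) ∈ frontier {x | 0 < x 0} := by
    simp [hfrontier]
  exact ⟨isViscositySubsolution_zero (isOpen_setOf_pos_apply 0),
    isViscositySupersolution_ite_halfSpace (i := 0) (j := 1) (by decide), hgap,
    ⟨0, frontier_subset_closure horigin, hgap 0 horigin⟩⟩
end
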